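/- For every c ∈ ℤ with −3 ≤ c ≤ 3 and all α, β ∈ R: if α = c + τ²·β in R and Q(α) > 18, then Q(β) < Q(α). -/

import Mathlib

/-!
Every complex root `z` of `X⁴ - μX³ - 2μX + 4` satisfies `|z|² = 2`. Applying the embedding
`φ_z` to `α = c + τ²β` gives `2|φ_z β| ≤ |φ_z α| + 3`, hence `|φ_z β|² ≤ |φ_z α|²/2 + 9/2`.
Summing over the four roots, `Q β ≤ Q α / 2 + 9`, which is `< Q α` as soon as `Q α > 18`.
-/

open Polynomial

noncomputable def P (μ : ℤ) : ℤ[X] := X ^ 4 - C μ * X ^ 3 - C (2 * μ) * X + 4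

noncomputable abbrev Rg (μ : ℤ) := AdjoinRoot (P μ)

noncomputable def tau (μ : ℤ) : Rg μ := AdjoinRoot.root (P μ)

noncomputable def Q (μ : ℤ) (α : Rg μ) : ℝ :=
  (1 / 2) * (((P μ).map (Int.castRingHom ℂ)).roots.attach.map
    (fun z => ‖AdjoinRoot.lift (Int.castRingHom ℂ) z.1
      (by
        have h2 : Polynomial.eval z.1 ((P μ).map (Int.castRingHom ℂ)) = 0 :=
          (Polynomial.mem_roots'.mp z.2).2
        rwa [Polynomial.eval_map] at h2) α‖ ^ 2)).sum

-- A real quadratic with negative discriminant has two conjugate roots, whose product is `q`.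
lemma Complex.normSq_eq_of_quadratic {t q : ℝ} (ht : t ^ 2 < 4 * q) {z : ℂ}
    (hz : z ^ 2 - t * z + q = 0) : Complex.normSq z = q := by
  have hre := congrArg Complex.re hz
  have him := congrArg Complex.im hz
  simp only [sq, Complex.sub_re, Complex.add_re, Complex.mul_re, Complex.ofReal_re,
    Complex.ofReal_im, Complex.sub_im, Complex.add_im, Complex.mul_im, Complex.zero_re,
    Complex.zero_im] at hre him
  have him0 : z.im ≠ 0 := by
    intro h0
    rw [h0] at hre
    nlinarith [sq_nonneg (2 * z.re - t)]
  have hsum : 2 * z.re = t := by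
    have : z.im * (2 * z.re - t) = 0 := by linear_combination him
    linarith [(mul_eq_zero.mp this).resolve_left him0]
  rw [Complex.normSq_apply]
  linear_combination -hre + z.re * hsum

-- The quartic factors over `ℝ` as `(z² - a z + 2)(z² - b z + 2)` with `a, b` the roots of
-- `w² - m w - 4`, and `m² < 2` is exactly what makes both `a² < 8` and `b² < 8`.
lemma normSq_eq_two_of_quartic {m : ℝ} (hm : m ^ 2 < 2) {z : ℂ}
    (hz : z ^ 4 - m * z ^ 3 - 2 * m * z + 4 = 0) : Complex.normSq z = 2 := by
  set s := √(m ^ 2 + 16)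
  have hs0 : 0 ≤ s := Real.sqrt_nonneg _
  have hs : s ^ 2 = m ^ 2 + 16 := Real.sq_sqrt (by positivity)
  have hsm : m * s < 8 - m ^ 2 := by nlinarith [sq_nonneg (m * s + 8 - m ^ 2)]
  have hsm' : -(m * s) < 8 - m ^ 2 := by nlinarith [sq_nonneg (m * s - 8 + m ^ 2)]
  have hfac : (z ^ 2 - ((m + s) / 2 : ℝ) * z + (2 : ℝ)) *
      (z ^ 2 - ((m - s) / 2 : ℝ) * z + (2 : ℝ)) = 0 := by
    have hsC : (s : ℂ) ^ 2 = (m : ℂ) ^ 2 + 16 := by exact_mod_cast hs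
    push_cast
    linear_combination hz - z ^ 2 / 4 * hsC
  rcases mul_eq_zero.mp hfac with h | h
  · exact Complex.normSq_eq_of_quadratic (by nlinarith) h
  · exact Complex.normSq_eq_of_quadratic (by nlinarith) h

lemma norm_sq_le_of_eq_add_mul {K : Type*} [NormedField K] {a b c u : K} {r : ℝ}
    (hu : ‖u‖ = 2) (hc : ‖c‖ ≤ r) (h : a = c + u * b) :
    ‖b‖ ^ 2 ≤ ‖a‖ ^ 2 / 2 + r ^ 2 / 2 := by
  have hb : 2 * ‖b‖ ≤ ‖a‖ + r :=
    calc 2 * ‖b‖ = ‖a - c‖ := by rw [h, add_sub_cancel_left, norm_mul, hu]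
      _ ≤ ‖a‖ + ‖c‖ := norm_sub_le _ _
      _ ≤ ‖a‖ + r := by gcongr
  nlinarith [norm_nonneg b, sq_nonneg (‖a‖ - r)]

lemma Multiset.sum_map_le_half_sum_map_add {ι : Type*} {s : Multiset ι} {f g : ι → ℝ} {k : ℝ}
    (h : ∀ i ∈ s, f i ≤ g i / 2 + k) :
    (s.map f).sum ≤ (s.map g).sum / 2 + Multiset.card s * k := by
  calc (s.map f).sum ≤ (s.map fun i => g i / 2 + k).sum := Multiset.sum_map_le_sum_map _ _ h
    _ = (s.map g).sum / 2 + Multiset.card s * k := by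
      rw [Multiset.sum_map_add, Multiset.sum_map_div, Multiset.map_const', Multiset.sum_replicate,
        nsmul_eq_mul]

lemma eval₂_P (μ : ℤ) (z : ℂ) :
    (P μ).eval₂ (Int.castRingHom ℂ) z = z ^ 4 - (μ : ℝ) * z ^ 3 - 2 * (μ : ℝ) * z + 4 := by
  simp only [P, eval₂_sub, eval₂_add, eval₂_mul, eval₂_C, eval₂_X, eval₂_pow, eval₂_ofNat,
    Int.coe_castRingHom]
  push_cast
  ring

lemma card_roots_P (μ : ℤ) : Multiset.card ((P μ).map (Int.castRingHom ℂ)).roots = 4 := by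
  have hmonic : (P μ).Monic := by unfold P; monicity!
  have hdeg : (P μ).natDegree = 4 := by unfold P; compute_degree!
  rw [IsAlgClosed.card_roots_eq_natDegree, hmonic.natDegree_map, hdeg]

lemma norm_lift_sq_le {μ : ℤ} (hμ : μ = 1 ∨ μ = -1) {c : ℤ} (hc : |c| ≤ 3) {α β : Rg μ}
    (h : α = (c : Rg μ) + tau μ ^ 2 * β) {z : ℂ} (hz : (P μ).eval₂ (Int.castRingHom ℂ) z = 0) :
    ‖AdjoinRoot.lift (Int.castRingHom ℂ) z hz β‖ ^ 2
      ≤ ‖AdjoinRoot.lift (Int.castRingHom ℂ) z hz α‖ ^ 2 / 2 + 9 / 2 := by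
  have hμ2 : (μ : ℝ) ^ 2 < 2 := by rcases hμ with rfl | rfl <;> norm_num
  have hz2 : ‖z ^ 2‖ = 2 := by
    rw [norm_pow, ← Complex.normSq_eq_norm_sq,
      normSq_eq_two_of_quartic hμ2 (by rwa [eval₂_P] at hz)]
  set φ := AdjoinRoot.lift (Int.castRingHom ℂ) z hz
  refine le_of_le_of_eq (norm_sq_le_of_eq_add_mul (a := φ α) (b := φ β) (c := (c : ℂ)) (r := 3)
    hz2 ?_ ?_) (by norm_num)
  · rw [Complex.norm_intCast]
    exact_mod_cast hc
  · rw [h, map_add, map_mul, map_pow, map_intCast, tau, AdjoinRoot.lift_root]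

lemma Q_le_half_add {μ : ℤ} (hμ : μ = 1 ∨ μ = -1) {c : ℤ} (hc : |c| ≤ 3) {α β : Rg μ}
    (h : α = (c : Rg μ) + tau μ ^ 2 * β) : Q μ β ≤ Q μ α / 2 + 9 := by
  have hsum := Multiset.sum_map_le_half_sum_map_add (k := 9 / 2)
    (s := ((P μ).map (Int.castRingHom ℂ)).roots.attach)
    fun z _ => norm_lift_sq_le hμ hc h ((eval_map _ _).symm.trans (mem_roots'.mp z.2).2)
  rw [Multiset.card_attach, card_roots_P] at hsum
  unfold Q
  linarith

/-- Norm decrease step for the GLS expansion (case of two steps): if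
`α = c + τ²·β` with an integer digit `−3 ≤ c ≤ 3` and `Q(α) > 18`,
then `Q(β) < Q(α)`. -/
theorem stmt18 (μ : ℤ) (hμ : μ = 1 ∨ μ = -1) (c : ℤ) (hc1 : -3 ≤ c) (hc2 : c ≤ 3)
    (α β : Rg μ) (h : α = (c : Rg μ) + tau μ ^ 2 * β) (hQ : Q μ α > 18) :
    Q μ β < Q μ α := by
  have := Q_le_half_add hμ (abs_le.mpr ⟨hc1, hc2⟩) h
  linarith
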